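/- arXiv:0712.3287 — 3 statements merged into one kernel-verified Lean document; each statement's English description precedes it below -/
import Mathlib

section
/- There is a continuous linear map N : L¹(ℝ^d, ℓ) → L¹(X, μ), f ↦ N_f, such that for every f ∈ L¹(ℝ^d, ℓ): (i) ‖N_f‖_{L¹(X,μ)} ≤ √2 · I · ‖f‖_{L¹(ℝ^d,ℓ)}, and (ii) N_f(Λ) = Σ_{x∈Λ} f(x) for μ-almost every Λ ∈ X. Moreover this map agrees with the counting functions on bounded measurable compactly supported functions. -/
open MeasureTheory Filter Topology Set
open scoped RealInnerProductSpace ENNReal NNReal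

noncomputable section

/-- The ambient space `ℝ^d`. -/
abbrev Vd (d : ℕ) := EuclideanSpace ℝ (Fin d)

/-- The open cube `C_R = (−R/2, R/2)^d`. -/
def cube (d : ℕ) (R : ℝ) : Set (Vd d) := {x | ∀ i, |x i| < R / 2}

/-- Translation of a subset of `ℝ^d` by `t`. -/
def tr {d : ℕ} (t : Vd d) (Λ : Set (Vd d)) : Set (Vd d) := (fun x => t + x) '' Λ

/-- `Λ` is `r`-uniformly discrete: every translate of the cube `C_r` contains at most one point. -/
def UD {d : ℕ} (r : ℝ) (Λ : Set (Vd d)) : Prop :=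
  ∀ a : Vd d, (Λ ∩ tr a (cube d r)).Subsingleton

/-- The counting function `N_f(Λ) = ∑_{x ∈ Λ} f x`. -/
def Nf {d : ℕ} (f : Vd d → ℂ) (Λ : Set (Vd d)) : ℂ := ∑' x : Λ, f (x : Vd d)

/-- The vague topology on point sets: the initial topology for the maps
`Λ ↦ ∑_{x ∈ Λ} f x`, `f` continuous with compact support. -/
def vagueTop (d : ℕ) : TopologicalSpace (Set (Vd d)) :=
  ⨅ (f : Vd d → ℂ) (_ : Continuous f) (_ : HasCompactSupport f),
    TopologicalSpace.induced (fun Λ => Nf f Λ) inferInstance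

instance (priority := 2000) instTopConfig (d : ℕ) : TopologicalSpace (Set (Vd d)) := vagueTop d
instance (priority := 2000) instMeasConfig (d : ℕ) : MeasurableSpace (Set (Vd d)) := borel _
instance (priority := 2000) instBorelConfig (d : ℕ) : BorelSpace (Set (Vd d)) := ⟨rfl⟩

/-- A uniformly discrete stationary ergodic point process with hull `X`,
law `μ` and intensity `I`. -/
structure IsPointProcess (d : ℕ) (r : ℝ) (X : Set (Set (Vd d)))
    (μ : Measure (Set (Vd d))) (I : ℝ≥0) : Prop where
  nonempty : X.Nonempty
  closedX : IsClosed X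
  invX : ∀ t : Vd d, tr t '' X = X
  ud : ∀ Λ ∈ X, UD r Λ
  prob : IsProbabilityMeasure μ
  suppX : μ Xᶜ = 0
  stationary : ∀ t : Vd d, μ.map (tr t) = μ
  ergodic : ∀ D : Set (Set (Vd d)), MeasurableSet D → (∀ t : Vd d, tr t '' D = D) →
    μ D = 0 ∨ μ D = 1
  Ipos : 0 < I
  intensity : ∀ A : Set (Vd d), MeasurableSet A →
    ∫⁻ Λ, ((Λ ∩ A).encard : ℝ≥0∞) ∂μ = (I : ℝ≥0∞) * volume A

/-- The Palm measure of `μ`: the finite measure `μ̇` with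
`ℓ(B)·μ̇(D) = ∫_X ∑_{x ∈ Λ ∩ B} 1_D(−x+Λ) dμ(Λ)`. -/
def IsPalm {d : ℕ} (μ μp : Measure (Set (Vd d))) : Prop :=
  IsFiniteMeasure μp ∧
  ∀ D : Set (Set (Vd d)), MeasurableSet D → ∀ B : Set (Vd d), MeasurableSet B →
    0 < volume B → volume B < ⊤ →
    volume B * μp D =
      ∫⁻ Λ, ∑' x : ↥(Λ ∩ B), D.indicator (fun _ => (1 : ℝ≥0∞)) (tr (-(x : Vd d)) Λ) ∂μ

/-- `μ1` is the first moment of the Palm measure `μp`. -/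
def IsFirstMoment {d : ℕ} (μp : Measure (Set (Vd d))) (μ1 : Measure (Vd d)) : Prop :=
  ∀ f : Vd d → ℂ, Continuous f → HasCompactSupport f →
    ∫ x, f x ∂μ1 = ∫ Λ, Nf f Λ ∂μp

/-- The character `x ↦ e^{2πi k·x}`. -/
def char {d : ℕ} (k x : Vd d) : ℂ :=
  Complex.exp (2 * Real.pi * Complex.I * ((⟪k, x⟫ : ℝ) : ℂ))

/-- The Fourier transform `f̂(y) = ∫ f(x) e^{−2πi x·y} dx`. -/
def fint {d : ℕ} (f : Vd d → ℂ) (y : Vd d) : ℂ := ∫ x, char x (-y) * f x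

/-! The Campbell formula `∫ ∑_{x ∈ Λ} g x dμ(Λ) = I ∫ g` (`g ≥ 0`) drives the proof.
It says that the mixture `μ.bind countMeasure` of the point measures `∑_{x ∈ Λ} δ_x` is `I • ℓ`,
which is the intensity hypothesis once `Λ ↦ ∑_{x ∈ Λ} δ_x` is measurable. Measurability
comes from the vague topology: on a bounded open set, counting points is a monotone limit of
counting functions of continuous compactly supported functions (finite sums, by uniform
discreteness), and open sets form a π-system generating the Borel sets.

Applied to `‖f‖`, the Campbell formula gives `‖N_f‖₁ ≤ I ‖f‖₁`, the almost sure absolute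
convergence of `∑_{x ∈ Λ} f x` (hence linearity of `f ↦ N_f`), and, applied to indicators of
null sets, that almost every `Λ` misses a given Lebesgue-null set, so that `N_f` depends only on
the class of `f` in `L¹`. -/

open Metric

section CountMeasure

variable {E : Type*} [MeasurableSpace E]

def countMeasure (Λ : Set E) : Measure E := Measure.sum fun x : Λ => Measure.dirac (x : E)

variable [MeasurableSingletonClass E]

theorem lintegral_countMeasure (g : E → ℝ≥0∞) (Λ : Set E) :
    ∫⁻ x, g x ∂countMeasure Λ = ∑' x : Λ, g x := by
  simp only [countMeasure, lintegral_sum_measure, lintegral_dirac]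

theorem countMeasure_apply (Λ : Set E) {A : Set E} (hA : MeasurableSet A) :
    countMeasure Λ A = (Λ ∩ A).encard := by
  rw [← lintegral_indicator_one hA, lintegral_countMeasure, ← ENNReal.tsum_set_one,
    tsum_subtype Λ, tsum_subtype (Λ ∩ A) (fun _ => (1 : ℝ≥0∞)), indicator_indicator]
  rfl

end CountMeasure

section IndicatorApprox

variable {α : Type*} [PseudoEMetricSpace α] (U : Set α)

def indicatorApprox (n : ℕ) (x : α) : ℝ≥0∞ := min 1 ((n : ℝ≥0∞) * infEDist x Uᶜ)

theorem indicatorApprox_ne_top (n : ℕ) (x : α) : indicatorApprox U n x ≠ ⊤ :=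
  ne_top_of_le_ne_top ENNReal.one_ne_top (min_le_left _ _)

theorem continuous_indicatorApprox (n : ℕ) : Continuous (indicatorApprox U n) :=
  continuous_const.min
    ((ENNReal.continuous_const_mul (ENNReal.natCast_ne_top n)).comp continuous_infEDist)

theorem support_indicatorApprox_subset (n : ℕ) : (indicatorApprox U n).support ⊆ U :=
  fun x hx => by
    by_contra hxU
    simp [indicatorApprox, infEDist_zero_of_mem (mem_compl hxU)] at hx

theorem monotone_indicatorApprox : Monotone (indicatorApprox U) := fun _ _ hab _ =>
  min_le_min le_rfl (mul_le_mul_left (Nat.cast_le.mpr hab) _)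

theorem iSup_indicatorApprox {U : Set α} (hU : IsOpen U) (x : α) :
    ⨆ n, indicatorApprox U n x = U.indicator 1 x := by
  by_cases hx : x ∈ U
  · have hpos : infEDist x Uᶜ ≠ 0 := by
      rwa [Ne, ← mem_iff_infEDist_zero_of_closed hU.isClosed_compl, notMem_compl_iff]
    obtain ⟨n, hn⟩ := ENNReal.exists_nat_mul_gt hpos ENNReal.one_ne_top
    rw [indicator_of_mem hx]
    exact le_antisymm (iSup_le fun _ => min_le_left _ _) (le_iSup_of_le n (le_min le_rfl hn.le))
  · simp [indicatorApprox, hx, infEDist_zero_of_mem (mem_compl hx)]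

end IndicatorApprox

theorem tsum_eq_toReal_sub_toReal {ι : Type*} {v : ι → ℝ} (hv : Summable v) :
    ∑' i, v i = (∑' i, ENNReal.ofReal (v i)).toReal - (∑' i, ENNReal.ofReal (-v i)).toReal := by
  have hpos : ∀ w : ι → ℝ, Summable w → Summable fun i => max (w i) 0 := fun w hw =>
    hw.abs.of_nonneg_of_le (fun _ => le_max_right _ _)
      (fun _ => max_le (le_abs_self _) (abs_nonneg _))
  simp only [ENNReal.tsum_toReal_eq (fun _ => ENNReal.ofReal_ne_top), ENNReal.toReal_ofReal']
  rw [← (hpos v hv).tsum_sub (hpos _ hv.neg)]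
  exact tsum_congr fun i => (max_zero_sub_max_neg_zero_eq_self (v i)).symm

theorem Nf_smul {d : ℕ} (c : ℂ) (f : Vd d → ℂ) : Nf (c • f) = c • Nf f :=
  funext fun _ => tsum_const_smul'' c

theorem tsum_ofReal_eq_ofReal_re_Nf {d : ℕ} {φ : Vd d → ℝ} (hφ : 0 ≤ φ) {Λ : Set (Vd d)}
    (hfin : (Λ ∩ φ.support).Finite) :
    ∑' x : Λ, ENNReal.ofReal (φ x) = ENNReal.ofReal (Nf (fun x => (φ x : ℂ)) Λ).re := by
  have hsum : Summable fun x : Λ => φ x :=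
    summable_of_hasFiniteSupport <| (hfin.preimage Subtype.val_injective.injOn).subset
      fun x hx => ⟨x.2, hx⟩
  rw [Nf, ← Complex.ofReal_tsum, Complex.ofReal_re,
    ENNReal.ofReal_tsum_of_nonneg (fun x : Λ => hφ x) hsum]

theorem continuous_Nf {d : ℕ} {f : Vd d → ℂ} (hf : Continuous f) (hfs : HasCompactSupport f) :
    Continuous (Nf f) :=
  continuous_iff_le_induced.mpr (iInf_le_of_le f (iInf_le_of_le hf (iInf_le _ hfs)))

theorem ball_subset_tr_cube {d : ℕ} (a : Vd d) (r : ℝ) : ball a (r / 2) ⊆ tr a (cube d r) := by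
  intro x hx
  refine ⟨x - a, fun i => ?_, add_sub_cancel a x⟩
  calc |(x - a) i| = ‖(x - a) i‖ := (Real.norm_eq_abs _).symm
    _ ≤ ‖x - a‖ := PiLp.norm_apply_le _ i
    _ < r / 2 := by rwa [← dist_eq_norm]

theorem UD.finite_inter_of_isCompact {d : ℕ} {r : ℝ} (hr : 0 < r) {Λ : Set (Vd d)}
    (hΛ : UD r Λ) {K : Set (Vd d)} (hK : IsCompact K) : (Λ ∩ K).Finite := by
  obtain ⟨t, -, ht, hKt⟩ := hK.finite_cover_balls (half_pos hr)
  refine (ht.biUnion fun a _ => (hΛ a).finite).subset ?_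
  rintro x ⟨hxΛ, hxK⟩
  obtain ⟨a, ha, hxa⟩ := mem_iUnion₂.mp (hKt hxK)
  exact mem_iUnion₂.mpr ⟨a, ha, hxΛ, ball_subset_tr_cube a r hxa⟩

theorem continuous_Nf_indicatorApprox {d : ℕ} {Q : Set (Vd d)} (hQb : Bornology.IsBounded Q)
    (n : ℕ) : Continuous (Nf fun x => ((indicatorApprox Q n x).toReal : ℂ)) := by
  have hc : Continuous fun x => (indicatorApprox Q n x).toReal :=
    ENNReal.continuousOn_toReal.comp_continuous (continuous_indicatorApprox Q n)
      (indicatorApprox_ne_top Q n)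
  have hs : HasCompactSupport fun x => (indicatorApprox Q n x).toReal :=
    .of_support_subset_isCompact hQb.isCompact_closure <|
      (Function.support_comp_subset ENNReal.toReal_zero _).trans
        ((support_indicatorApprox_subset Q n).trans subset_closure)
  exact continuous_Nf (Complex.continuous_ofReal.comp hc)
    (hs.comp_left (g := Complex.ofReal) Complex.ofReal_zero)

theorem encard_inter_eq_iSup_Nf_indicatorApprox {d : ℕ} {Λ Q : Set (Vd d)} (hQ : IsOpen Q)
    (hfin : (Λ ∩ Q).Finite) : ((Λ ∩ Q).encard : ℝ≥0∞)
      = ⨆ n, ENNReal.ofReal (Nf (fun x => ((indicatorApprox Q n x).toReal : ℂ)) Λ).re := by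
  rw [← countMeasure_apply Λ hQ.measurableSet, ← lintegral_indicator_one hQ.measurableSet,
    ← funext (iSup_indicatorApprox hQ), lintegral_iSup
      (fun n => (continuous_indicatorApprox Q n).measurable) (monotone_indicatorApprox Q)]
  refine iSup_congr fun n => ?_
  have h_supp : (fun x => (indicatorApprox Q n x).toReal).support ⊆ Q :=
    (Function.support_comp_subset ENNReal.toReal_zero _).trans (support_indicatorApprox_subset Q n)
  rw [← tsum_ofReal_eq_ofReal_re_Nf (fun x => ENNReal.toReal_nonneg)
    (hfin.subset (inter_subset_inter_right _ h_supp)), lintegral_countMeasure]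
  exact tsum_congr fun x => (ENNReal.ofReal_toReal (indicatorApprox_ne_top Q n x)).symm

section Measurability

variable {d : ℕ} {r : ℝ} {X : Set (Set (Vd d))}

/- Off `X` a point set need not be locally finite, so measurability is proved for the point
measures cut down to `X`; these agree with `countMeasure` almost everywhere. -/
theorem measurable_indicator_encard_inter (hr : 0 < r) (hXm : MeasurableSet X)
    (hud : ∀ Λ ∈ X, UD r Λ) {Q : Set (Vd d)} (hQ : IsOpen Q) (hQb : Bornology.IsBounded Q) :
    Measurable (X.indicator fun Λ => ((Λ ∩ Q).encard : ℝ≥0∞)) := by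
  have h_eq : ∀ Λ ∈ X, ((Λ ∩ Q).encard : ℝ≥0∞)
      = ⨆ n, ENNReal.ofReal (Nf (fun x => ((indicatorApprox Q n x).toReal : ℂ)) Λ).re :=
    fun Λ hΛ => encard_inter_eq_iSup_Nf_indicatorApprox hQ <|
      ((hud Λ hΛ).finite_inter_of_isCompact hr hQb.isCompact_closure).subset
        (inter_subset_inter_right _ subset_closure)
  rw [indicator_congr h_eq]
  exact (Measurable.iSup fun n => ENNReal.measurable_ofReal.comp
    (Complex.measurable_re.comp (continuous_Nf_indicatorApprox hQb n).measurable)).indicator hXm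

/- The π-system argument needs finite measures, hence the restriction to balls. -/
theorem measurable_restrict_ball_indicator_countMeasure (hr : 0 < r) (hXm : MeasurableSet X)
    (hud : ∀ Λ ∈ X, UD r Λ) (m : ℕ) :
    Measurable fun Λ => (X.indicator countMeasure Λ).restrict (ball (0 : Vd d) m) := by
  have h_apply : ∀ U, MeasurableSet U → ∀ Λ, (X.indicator countMeasure Λ).restrict (ball 0 m) U
      = X.indicator (fun Λ => ((Λ ∩ (U ∩ ball (0 : Vd d) m)).encard : ℝ≥0∞)) Λ := by
    intro U hU Λ
    by_cases hΛ : Λ ∈ X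
    · simp [hΛ, Measure.restrict_apply hU, countMeasure_apply Λ (hU.inter measurableSet_ball)]
    · simp [hΛ]
  have h_meas : ∀ U, IsOpen U →
      Measurable fun Λ => (X.indicator countMeasure Λ).restrict (ball 0 m) U := by
    intro U hU
    simp_rw [h_apply U hU.measurableSet]
    exact measurable_indicator_encard_inter hr hXm hud (hU.inter isOpen_ball)
      (isBounded_ball.subset inter_subset_right)
  have h_finite : ∀ Λ, IsFiniteMeasure ((X.indicator countMeasure Λ).restrict (ball (0 : Vd d) m)) := by
    refine fun Λ => ⟨?_⟩
    rw [h_apply univ MeasurableSet.univ]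
    by_cases hΛ : Λ ∈ X
    · rw [indicator_of_mem hΛ, ENat.toENNReal_lt_top, univ_inter]
      exact ((hud Λ hΛ).finite_inter_of_isCompact hr (isCompact_closedBall 0 m)).subset
        (inter_subset_inter_right _ ball_subset_closedBall) |>.encard_lt_top
    · simp [hΛ]
  exact Measurable.measure_of_isPiSystem BorelSpace.measurable_eq isPiSystem_isOpen h_meas
    (h_meas univ isOpen_univ)

theorem measurable_indicator_countMeasure (hr : 0 < r) (hXm : MeasurableSet X)
    (hud : ∀ Λ ∈ X, UD r Λ) : Measurable (X.indicator countMeasure) := by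
  refine Measure.measurable_of_measurable_coe _ fun A hA => ?_
  have h_iSup : ∀ Λ, X.indicator countMeasure Λ A
      = ⨆ m : ℕ, (X.indicator countMeasure Λ).restrict (ball (0 : Vd d) m) A := by
    intro Λ
    simp_rw [Measure.restrict_apply hA]
    rw [← Monotone.measure_iUnion fun a b hab =>
      inter_subset_inter_right _ (ball_subset_ball (Nat.cast_le.mpr hab)),
      ← inter_iUnion, iUnion_ball_nat, inter_univ]
  simp_rw [h_iSup]
  exact .iSup fun m => (Measure.measurable_coe hA).comp
    (measurable_restrict_ball_indicator_countMeasure hr hXm hud m)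

end Measurability

namespace IsPointProcess

variable {d : ℕ} {r : ℝ} {X : Set (Set (Vd d))} {μ : Measure (Set (Vd d))} {I : ℝ≥0}

theorem ae_mem (hX : IsPointProcess d r X μ I) : ∀ᵐ Λ ∂μ, Λ ∈ X :=
  mem_ae_iff.mpr hX.suppX

theorem aemeasurable_countMeasure (hX : IsPointProcess d r X μ I) (hr : 0 < r) :
    AEMeasurable countMeasure μ :=
  ⟨X.indicator countMeasure,
    measurable_indicator_countMeasure hr hX.closedX.measurableSet hX.ud,
    by filter_upwards [hX.ae_mem] with Λ hΛ using (indicator_of_mem hΛ _).symm⟩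

theorem bind_countMeasure (hX : IsPointProcess d r X μ I) (hr : 0 < r) :
    μ.bind countMeasure = (I : ℝ≥0∞) • volume := by
  ext A hA
  rw [Measure.bind_apply hA (hX.aemeasurable_countMeasure hr), Measure.smul_apply, smul_eq_mul,
    ← hX.intensity A hA]
  exact lintegral_congr fun Λ => countMeasure_apply Λ hA

theorem lintegral_tsum (hX : IsPointProcess d r X μ I) (hr : 0 < r) {g : Vd d → ℝ≥0∞}
    (hg : AEMeasurable g volume) :
    ∫⁻ Λ, ∑' x : Λ, g x ∂μ = I * ∫⁻ x, g x := by
  simp_rw [← lintegral_countMeasure]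
  rw [← Measure.lintegral_bind (hX.aemeasurable_countMeasure hr)
      (by rw [hX.bind_countMeasure hr]; exact hg.smul_measure _),
    hX.bind_countMeasure hr, lintegral_smul_measure, smul_eq_mul]

theorem ae_forall_mem (hX : IsPointProcess d r X μ I) (hr : 0 < r) {p : Vd d → Prop}
    (hp : ∀ᵐ x, p x) : ∀ᵐ Λ ∂μ, ∀ x ∈ Λ, p x := by
  obtain ⟨N, hpN, hNm, hN0⟩ := exists_measurable_superset_of_null (ae_iff.mp hp)
  have h_int : ∫⁻ Λ, countMeasure Λ N ∂μ = 0 := by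
    rw [← Measure.bind_apply hNm (hX.aemeasurable_countMeasure hr), hX.bind_countMeasure hr,
      Measure.smul_apply, hN0, smul_zero]
  filter_upwards [(lintegral_eq_zero_iff' ((Measure.measurable_coe hNm).comp_aemeasurable
    (hX.aemeasurable_countMeasure hr))).mp h_int] with Λ hΛ x hx
  by_contra hpx
  have : (Λ ∩ N).encard = 0 := by simpa [countMeasure_apply Λ hNm] using hΛ
  exact (encard_eq_zero.mp this).subset ⟨hx, hpN hpx⟩

theorem Nf_congr_ae (hX : IsPointProcess d r X μ I) (hr : 0 < r) {f g : Vd d → ℂ}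
    (hfg : f =ᵐ[volume] g) : Nf f =ᵐ[μ] Nf g := by
  filter_upwards [hX.ae_forall_mem hr hfg] with Λ hΛ using tsum_congr fun x => hΛ x x.2

theorem aemeasurable_tsum (hX : IsPointProcess d r X μ I) (hr : 0 < r) {g : Vd d → ℝ≥0∞}
    (hg : AEMeasurable g volume) : AEMeasurable (fun Λ : Set (Vd d) => ∑' x : Λ, g x) μ := by
  refine ((Measure.measurable_lintegral hg.measurable_mk).comp_aemeasurable
    (hX.aemeasurable_countMeasure hr)).congr ?_
  filter_upwards [hX.ae_forall_mem hr hg.ae_eq_mk] with Λ hΛ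
  rw [Function.comp_apply, lintegral_countMeasure]
  exact tsum_congr fun x => (hΛ x x.2).symm

theorem ae_summable (hX : IsPointProcess d r X μ I) (hr : 0 < r) {f : Vd d → ℂ}
    (hf : Integrable f volume) : ∀ᵐ Λ ∂μ, Summable fun x : (Λ : Set (Vd d)) => f x := by
  have h_fin : ∫⁻ Λ : Set (Vd d), ∑' x : Λ, ‖f x‖ₑ ∂μ ≠ ⊤ := by
    rw [hX.lintegral_tsum hr hf.1.enorm]
    exact ENNReal.mul_ne_top ENNReal.coe_ne_top hf.2.ne
  filter_upwards [ae_lt_top' (hX.aemeasurable_tsum hr hf.1.enorm) h_fin] with Λ hΛ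
  exact Summable.of_enorm hΛ.ne

theorem aestronglyMeasurable_Nf (hX : IsPointProcess d r X μ I) (hr : 0 < r) {f : Vd d → ℂ}
    (hf : Integrable f volume) : AEStronglyMeasurable (Nf f) μ := by
  have h_part : ∀ u : Vd d → ℝ, AEMeasurable u volume →
      AEMeasurable (fun Λ : Set (Vd d) => (∑' x : Λ, ENNReal.ofReal (u x)).toReal) μ :=
    fun u hu => (hX.aemeasurable_tsum hr hu.ennreal_ofReal).ennreal_toReal
  have h_real : ∀ u : Vd d → ℝ, AEMeasurable u volume → AEMeasurable
      (fun Λ : Set (Vd d) => (∑' x : Λ, ENNReal.ofReal (u x)).toReal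
        - (∑' x : Λ, ENNReal.ofReal (-u x)).toReal) μ :=
    fun u hu => (h_part u hu).sub (h_part _ hu.neg)
  have hre := h_real _ (Complex.measurable_re.comp_aemeasurable hf.1.aemeasurable)
  have him := h_real _ (Complex.measurable_im.comp_aemeasurable hf.1.aemeasurable)
  refine ((Complex.measurable_ofReal.comp_aemeasurable hre).add
    ((Complex.measurable_ofReal.comp_aemeasurable him).mul_const Complex.I))
    |>.aestronglyMeasurable.congr ?_
  filter_upwards [hX.ae_summable hr hf] with Λ hΛ
  have hre_sum : Summable fun x : Λ => (f x).re := Complex.reCLM.summable hΛ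
  have him_sum : Summable fun x : Λ => (f x).im := Complex.imCLM.summable hΛ
  rw [← Complex.re_add_im (Nf f Λ), Nf, Complex.re_tsum hΛ, Complex.im_tsum hΛ,
    tsum_eq_toReal_sub_toReal hre_sum, tsum_eq_toReal_sub_toReal him_sum]
  rfl

theorem lintegral_enorm_Nf_le (hX : IsPointProcess d r X μ I) (hr : 0 < r) {f : Vd d → ℂ}
    (hf : AEStronglyMeasurable f volume) : ∫⁻ Λ, ‖Nf f Λ‖ₑ ∂μ ≤ I * ∫⁻ x, ‖f x‖ₑ :=
  (lintegral_mono fun _ => enorm_tsum_le_tsum_enorm).trans_eq (hX.lintegral_tsum hr hf.enorm)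

theorem integrable_Nf (hX : IsPointProcess d r X μ I) (hr : 0 < r) {f : Vd d → ℂ}
    (hf : Integrable f volume) : Integrable (Nf f) μ :=
  ⟨hX.aestronglyMeasurable_Nf hr hf,
    (hX.lintegral_enorm_Nf_le hr hf.1).trans_lt (ENNReal.mul_lt_top ENNReal.coe_lt_top hf.2)⟩

theorem Nf_add_ae (hX : IsPointProcess d r X μ I) (hr : 0 < r) {f g : Vd d → ℂ}
    (hf : Integrable f volume) (hg : Integrable g volume) : Nf (f + g) =ᵐ[μ] Nf f + Nf g := by
  filter_upwards [hX.ae_summable hr hf, hX.ae_summable hr hg] with Λ hfΛ hgΛ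
  exact hfΛ.tsum_add hgΛ

def countingLinearMap (hX : IsPointProcess d r X μ I) (hr : 0 < r) :
    Lp ℂ 1 (volume : Measure (Vd d)) →ₗ[ℂ] Lp ℂ 1 μ where
  toFun F := (hX.integrable_Nf hr (L1.integrable_coeFn F)).toL1 _
  map_add' F G := by
    refine Lp.ext ?_
    calc _ =ᵐ[μ] Nf ⇑(F + G) := Integrable.coeFn_toL1 _
      _ =ᵐ[μ] Nf (⇑F + ⇑G) := hX.Nf_congr_ae hr (Lp.coeFn_add F G)
      _ =ᵐ[μ] Nf ⇑F + Nf ⇑G := hX.Nf_add_ae hr (L1.integrable_coeFn F) (L1.integrable_coeFn G)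
      _ =ᵐ[μ] _ := ((Integrable.coeFn_toL1 _).add (Integrable.coeFn_toL1 _)).symm.trans
        (Lp.coeFn_add _ _).symm
  map_smul' c F := by
    refine Lp.ext ?_
    calc _ =ᵐ[μ] Nf ⇑(c • F) := Integrable.coeFn_toL1 _
      _ =ᵐ[μ] Nf (c • ⇑F) := hX.Nf_congr_ae hr (Lp.coeFn_smul c F)
      _ = c • Nf ⇑F := Nf_smul c _
      _ =ᵐ[μ] _ := ((Integrable.coeFn_toL1 _).const_smul c).symm.trans (Lp.coeFn_smul _ _).symm

theorem coeFn_countingLinearMap (hX : IsPointProcess d r X μ I) (hr : 0 < r)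
    (F : Lp ℂ 1 (volume : Measure (Vd d))) : hX.countingLinearMap hr F =ᵐ[μ] Nf F :=
  Integrable.coeFn_toL1 (hX.integrable_Nf hr (L1.integrable_coeFn F))

theorem norm_countingLinearMap_le (hX : IsPointProcess d r X μ I) (hr : 0 < r)
    (F : Lp ℂ 1 (volume : Measure (Vd d))) : ‖hX.countingLinearMap hr F‖ ≤ I * ‖F‖ := by
  have h_eq : ∫⁻ Λ, ‖hX.countingLinearMap hr F Λ‖ₑ ∂μ = ∫⁻ Λ, ‖Nf F Λ‖ₑ ∂μ :=
    lintegral_congr_ae ((hX.coeFn_countingLinearMap hr F).fun_comp _)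
  rw [L1.norm_def, L1.norm_def, h_eq, ← ENNReal.coe_toReal, ← ENNReal.toReal_mul]
  exact ENNReal.toReal_mono (ENNReal.mul_ne_top ENNReal.coe_ne_top (L1.integrable_coeFn F).2.ne)
    (hX.lintegral_enorm_Nf_le hr (Lp.aestronglyMeasurable F))

end IsPointProcess

theorem counting_map_L1_general {d : ℕ} {r : ℝ} (hr : 0 < r)
    {X : Set (Set (Vd d))} {μ : Measure (Set (Vd d))} {I : ℝ≥0}
    (hX : IsPointProcess d r X μ I) :
    ∃ N : Lp ℂ 1 (volume : Measure (Vd d)) →L[ℂ] Lp ℂ 1 μ,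
      (∀ g : Lp ℂ 1 (volume : Measure (Vd d)), ‖N g‖ ≤ Real.sqrt 2 * (I : ℝ) * ‖g‖) ∧
      (∀ (f : Vd d → ℂ) (hf : Integrable f volume),
        ∀ᵐ Λ ∂μ, (N ((memLp_one_iff_integrable.mpr hf).toLp f) : Set (Vd d) → ℂ) Λ = ∑' x : Λ, f (x : Vd d)) := by
  refine ⟨(hX.countingLinearMap hr).mkContinuous I (hX.norm_countingLinearMap_le hr),
    fun F => ?_, fun f hf => ?_⟩
  · rw [LinearMap.mkContinuous_apply, mul_assoc]
    exact (hX.norm_countingLinearMap_le hr F).trans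
      (le_mul_of_one_le_left (by positivity) (Real.one_le_sqrt.mpr one_le_two))
  · exact (hX.coeFn_countingLinearMap hr _).trans
      (hX.Nf_congr_ae hr (MemLp.coeFn_toLp _))

/-- The counting functions extend to a continuous linear map
`N : L¹(ℝ^d, ℓ) → L¹(X, μ)` with `‖N_f‖₁ ≤ √2·I·‖f‖₁` and `N_f(Λ) = ∑_{x∈Λ} f(x)`
for `μ`-almost every `Λ`. -/
theorem counting_map_L1 {d : ℕ} (hd : 0 < d) {r : ℝ} (hr : 0 < r)
    {X : Set (Set (Vd d))} {μ : Measure (Set (Vd d))} {I : ℝ≥0}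
    (hX : IsPointProcess d r X μ I) :
    ∃ N : Lp ℂ 1 (volume : Measure (Vd d)) →L[ℂ] Lp ℂ 1 μ,
      (∀ g : Lp ℂ 1 (volume : Measure (Vd d)), ‖N g‖ ≤ Real.sqrt 2 * (I : ℝ) * ‖g‖) ∧
      (∀ (f : Vd d → ℂ) (hf : Integrable f volume),
        ∀ᵐ Λ ∂μ, (N ((memLp_one_iff_integrable.mpr hf).toLp f) : Set (Vd d) → ℂ) Λ = ∑' x : Λ, f (x : Vd d)) :=
  counting_map_L1_general hr hX
end
end

section
/- Let f_n (n ∈ ℕ) and f be measurable ℂ-valued functions on ℝ^d whose supports are all contained in a fixed compact set K ⊆ ℝ^d, with ‖f_n‖_∞ < M and ‖f‖_∞ < M for some M > 0, and suppose f_n → f in the L¹-norm on (ℝ^d, ℓ). Then N_{f_n} → N_f in the L²-norm on (X, μ). -/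
open MeasureTheory Filter Topology Set
open scoped RealInnerProductSpace ENNReal NNReal

noncomputable section

/-! On almost every configuration `Λ`, which is `r`-uniformly discrete, the compact set `K`
carries at most `C` points, so for `g = f_n - f` one has
`|N_g(Λ)|² ≤ C · 2M · ∑_{x ∈ Λ} |g x|`. Campbell's formula
`∫ ∑_{x ∈ Λ} h x dμ = I ∫ h dℓ`, obtained from the intensity identity by the monotone class
argument for nonnegative measurable `h`, turns this into `E|N_{f_n} - N_f|² ≤ 2MCI ‖f_n - f‖₁`.
The measurability of `Λ ↦ #(Λ ∩ A)` needed for Campbell's formula comes from the vague topology: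
for bounded open `A` it is the limit of `N_{φ_k}` with continuous `φ_k ↑ 1_A`, and a π-λ argument
extends it to Borel sets. -/

open Function

namespace Set

variable {α : Type*}

theorem tsum_indicator_const_eq_encard_mul (Λ A : Set α) (c : ℝ≥0∞) :
    ∑' x : Λ, A.indicator (fun _ => c) x = (Λ ∩ A).encard * c := by
  rw [← ENNReal.tsum_set_const, tsum_subtype, tsum_subtype (Λ ∩ A) fun _ => c,
    indicator_indicator]

theorem encard_iUnion_of_pairwise_disjoint {s : ℕ → Set α} (hs : Pairwise (Disjoint on s)) :
    ((⋃ i, s i).encard : ℝ≥0∞) = ∑' i, ((s i).encard : ℝ≥0∞) := by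
  let _ : MeasurableSpace α := ⊤
  simp only [← Measure.count_apply MeasurableSpace.measurableSet_top]
  exact measure_iUnion hs fun _ => MeasurableSpace.measurableSet_top

theorem encard_iUnion_of_monotone {s : ℕ → Set α} (hs : Monotone s) :
    ((⋃ i, s i).encard : ℝ≥0∞) = ⨆ i, ((s i).encard : ℝ≥0∞) := by
  let _ : MeasurableSpace α := ⊤
  simp only [← Measure.count_apply MeasurableSpace.measurableSet_top]
  exact hs.measure_iUnion

end Set

theorem ENNReal.tsum_iSup_of_monotone {ι : Type*} {f : ℕ → ι → ℝ≥0∞} (hf : Monotone f) :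
    ∑' i, ⨆ n, f n i = ⨆ n, ∑' i, f n i := by
  let _ : MeasurableSpace ι := ⊤
  simp only [← lintegral_count' measurable_from_top]
  exact lintegral_iSup (fun _ => measurable_from_top) hf

theorem tendsto_min_one_mul_infDist {α : Type*} [PseudoMetricSpace α] {A : Set α}
    (hA : IsOpen A) (hAc : Aᶜ.Nonempty) {x : α} (hx : x ∈ A) :
    Tendsto (fun k : ℕ => min 1 (k * Metric.infDist x Aᶜ)) atTop (𝓝 1) := by
  have hpos : 0 < Metric.infDist x Aᶜ :=
    (hA.isClosed_compl.notMem_iff_infDist_pos hAc).1 (not_not_intro hx)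
  refine tendsto_const_nhds.congr' ?_
  filter_upwards [(tendsto_natCast_atTop_atTop.atTop_mul_const hpos).eventually_ge_atTop 1]
    with k hk using (min_eq_left hk).symm

theorem integrable_of_bounded_of_support_subset_isCompact {α E : Type*} [TopologicalSpace α]
    [MeasurableSpace α] [NormedAddCommGroup E] {ν : Measure α} [IsFiniteMeasureOnCompacts ν]
    {f : α → E} (hf : AEStronglyMeasurable f ν) {K : Set α} (hK : IsCompact K)
    (hfK : support f ⊆ K) {C : ℝ} (hC : ∀ x, ‖f x‖ ≤ C) : Integrable f ν :=
  (integrableOn_iff_integrable_of_support_subset hfK).1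
    (Measure.integrableOn_of_bounded hK.measure_lt_top.ne hf (ae_of_all _ hC))

theorem tendsto_lintegral_enorm_of_tendsto_integral_norm {α E ι : Type*} [MeasurableSpace α]
    [NormedAddCommGroup E] {ν : Measure α} {l : Filter ι} {F : ι → α → E}
    (hF : ∀ i, Integrable (F i) ν) (h : Tendsto (fun i => ∫ x, ‖F i x‖ ∂ν) l (𝓝 0)) :
    Tendsto (fun i => ∫⁻ x, ‖F i x‖ₑ ∂ν) l (𝓝 0) := by
  have h' := ENNReal.tendsto_ofReal h
  rw [ENNReal.ofReal_zero] at h'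
  exact h'.congr fun i => ofReal_integral_norm_eq_lintegral_enorm (hF i)

section Campbell

variable {α : Type*} [MeasurableSpace α] [MeasurableSpace (Set α)] {μ : Measure (Set α)}

theorem aemeasurable_tsum_of_aemeasurable_encard
    (hmeas : ∀ A, MeasurableSet A → AEMeasurable (fun Λ : Set α => ((Λ ∩ A).encard : ℝ≥0∞)) μ)
    {h : α → ℝ≥0∞} (hh : Measurable h) :
    AEMeasurable (fun Λ : Set α => ∑' x : Λ, h x) μ := by
  refine hh.ennreal_induction (fun c A hA => ?_) (fun f g _ _ _ hf hg => ?_)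
    (fun f _ hmono hf => ?_)
  · simp only [Set.tsum_indicator_const_eq_encard_mul]
    exact (hmeas A hA).mul_const c
  · simp only [Pi.add_apply, ENNReal.tsum_add]
    exact hf.add hg
  · simp only [fun Λ : Set α => ENNReal.tsum_iSup_of_monotone fun m n hmn (x : Λ) => hmono hmn x]
    exact .iSup hf

/-- Campbell's formula. -/
theorem lintegral_tsum_eq_of_lintegral_encard
    (hmeas : ∀ A, MeasurableSet A → AEMeasurable (fun Λ : Set α => ((Λ ∩ A).encard : ℝ≥0∞)) μ)
    {ν : Measure α} {c : ℝ≥0∞}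
    (hint : ∀ A, MeasurableSet A → ∫⁻ Λ, ((Λ ∩ A).encard : ℝ≥0∞) ∂μ = c * ν A)
    {h : α → ℝ≥0∞} (hh : Measurable h) :
    ∫⁻ Λ, ∑' x : Λ, h x ∂μ = c * ∫⁻ x, h x ∂ν := by
  refine hh.ennreal_induction (fun b A hA => ?_) (fun f g _ hfm _ hf hg => ?_)
    (fun f hfm hmono hf => ?_)
  · simp only [Set.tsum_indicator_const_eq_encard_mul]
    rw [lintegral_mul_const'' b (hmeas A hA), hint A hA, lintegral_indicator_const hA,
      mul_assoc, mul_comm b]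
  · simp only [Pi.add_apply, ENNReal.tsum_add]
    rw [lintegral_add_left' (aemeasurable_tsum_of_aemeasurable_encard hmeas hfm), hf, hg,
      lintegral_add_left hfm, mul_add]
  · simp only [fun Λ : Set α => ENNReal.tsum_iSup_of_monotone fun m n hmn (x : Λ) => hmono hmn x]
    rw [lintegral_iSup' (fun n => aemeasurable_tsum_of_aemeasurable_encard hmeas (hfm n))
      (ae_of_all _ fun Λ m n hmn => ENNReal.tsum_le_tsum fun x => hmono hmn x),
      lintegral_iSup hfm hmono, ENNReal.mul_iSup]
    simp only [hf]

end Campbell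

section UniformlyDiscrete

variable {d : ℕ} {r : ℝ}

theorem isOpen_cube (d : ℕ) (R : ℝ) : IsOpen (cube d R) := by
  simp only [cube, ofPred_forall]
  exact isOpen_iInter_of_finite fun i => isOpen_lt (by fun_prop) continuous_const

theorem isOpen_tr (t : Vd d) {s : Set (Vd d)} (hs : IsOpen s) : IsOpen (tr t s) :=
  isOpenMap_add_left t s hs

theorem mem_tr_cube_self {R : ℝ} (hR : 0 < R) (t : Vd d) : t ∈ tr t (cube d R) :=
  ⟨0, fun i => by simpa using half_pos hR, add_zero t⟩

theorem exists_encard_inter_le_of_UD (hr : 0 < r) {B : Set (Vd d)} (hB : IsCompact B) :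
    ∃ C : ℕ, ∀ Λ, UD r Λ → (Λ ∩ B).encard ≤ C := by
  obtain ⟨t, ht⟩ := hB.elim_finite_subcover (fun a => tr a (cube d r))
    (fun a => isOpen_tr a (isOpen_cube d r)) fun x _ => mem_iUnion.2 ⟨x, mem_tr_cube_self hr x⟩
  refine ⟨t.card, fun Λ hΛ => ?_⟩
  calc (Λ ∩ B).encard ≤ (⋃ a ∈ t, Λ ∩ tr a (cube d r)).encard := by
        refine encard_mono fun x hx => ?_
        obtain ⟨a, ha, hxa⟩ := mem_iUnion₂.1 (ht hx.2)
        exact mem_iUnion₂.2 ⟨a, ha, hx.1, hxa⟩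
    _ ≤ ∑ a ∈ t, (Λ ∩ tr a (cube d r)).encard := Finset.set_encard_biUnion_le _ _
    _ ≤ ∑ _a ∈ t, 1 :=
        Finset.sum_le_sum fun a _ => encard_le_one_iff.2 fun x y hx hy => hΛ a hx hy
    _ = t.card := by simp

theorem UD.finite_inter_of_isBounded (hr : 0 < r) {Λ : Set (Vd d)} (hΛ : UD r Λ)
    {B : Set (Vd d)} (hB : Bornology.IsBounded B) : (Λ ∩ B).Finite := by
  obtain ⟨C, hC⟩ := exists_encard_inter_le_of_UD hr hB.isCompact_closure
  refine finite_of_encard_le_coe ((encard_mono ?_).trans (hC Λ hΛ))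
  exact inter_subset_inter_right Λ subset_closure

end UniformlyDiscrete

section CountingFunction

variable {d : ℕ} {Λ A : Set (Vd d)}

theorem summable_of_support_subset {g : Vd d → ℂ} (hg : support g ⊆ A) (hfin : (Λ ∩ A).Finite) :
    Summable fun x : Λ => g x := by
  refine summable_of_hasFiniteSupport ((hfin.preimage Subtype.val_injective.injOn).subset ?_)
  exact fun x hx => ⟨x.2, hg hx⟩

theorem Nf_sub {f g : Vd d → ℂ} (hf : support f ⊆ A) (hg : support g ⊆ A)
    (hfin : (Λ ∩ A).Finite) : Nf (f - g) Λ = Nf f Λ - Nf g Λ :=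
  (summable_of_support_subset hf hfin).tsum_sub (summable_of_support_subset hg hfin)

theorem Nf_eq_sum {g : Vd d → ℂ} (hg : support g ⊆ A) (hfin : (Λ ∩ A).Finite) :
    Nf g Λ = ∑ x ∈ hfin.toFinset, g x := by
  have hΛA : (Λ ∩ A).indicator g = Λ.indicator g := by
    rw [← indicator_indicator, indicator_eq_self.2 hg]
  rw [Nf, tsum_subtype, ← hΛA, ← tsum_subtype, ← Finset.tsum_subtype', hfin.coe_toFinset]

theorem enorm_Nf_sq_le {g : Vd d → ℂ} (hg : support g ⊆ A) {B : ℝ≥0∞}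
    (hB : ∀ x, ‖g x‖ₑ ≤ B) : ‖Nf g Λ‖ₑ ^ 2 ≤ (Λ ∩ A).encard * B * ∑' x : Λ, ‖g x‖ₑ := by
  have hNf : ‖Nf g Λ‖ₑ ≤ ∑' x : Λ, ‖g x‖ₑ := enorm_tsum_le_tsum_enorm
  have hsum : ∑' x : Λ, ‖g x‖ₑ ≤ (Λ ∩ A).encard * B := by
    rw [← tsum_indicator_const_eq_encard_mul]
    refine ENNReal.tsum_le_tsum fun x => ?_
    by_cases hx : (x : Vd d) ∈ A
    · rw [indicator_of_mem hx]
      exact hB x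
    · simp [notMem_support.1 fun h => hx (hg h)]
  rw [sq]
  exact mul_le_mul' (hNf.trans hsum) hNf

theorem Nf_continuous {f : Vd d → ℂ} (hc : Continuous f) (hs : HasCompactSupport f) :
    Continuous (Nf f) :=
  continuous_iff_le_induced.2 <| iInf_le_of_le f <| iInf_le_of_le hc <| iInf_le_of_le hs le_rfl

end CountingFunction

section Measurability

variable {d : ℕ} {μ : Measure (Set (Vd d))}

theorem aemeasurable_encard_inter_of_isOpen (hd : 0 < d) {A : Set (Vd d)} (hA : IsOpen A)
    (hAb : Bornology.IsBounded A) (hfin : ∀ᵐ Λ ∂μ, (Λ ∩ A).Finite) :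
    AEMeasurable (fun Λ => ((Λ ∩ A).encard : ℝ≥0∞)) μ := by
  have : Nontrivial (Vd d) := by
    have : Nonempty (Fin d) := ⟨⟨0, hd⟩⟩
    infer_instance
  have hAc : Aᶜ.Nonempty :=
    nonempty_compl.2 fun h => NormedSpace.unbounded_univ ℝ (Vd d) (h ▸ hAb)
  set φ : ℕ → Vd d → ℂ := fun k x => ((min 1 (k * Metric.infDist x Aᶜ) : ℝ) : ℂ)
  have hφA : ∀ k, support (φ k) ⊆ A := fun k x hx => by
    by_contra hxA
    simp [φ, Metric.infDist_zero_of_mem (mem_compl hxA)] at hx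
  have hφ : ∀ k, Measurable fun Λ => ‖Nf (φ k) Λ‖ₑ := fun k =>
    (Nf_continuous (by fun_prop) (hAb.isCompact_closure.of_isClosed_subset
      (isClosed_tsupport _) (closure_mono (hφA k)))).measurable.enorm
  refine aemeasurable_of_tendsto_metrizable_ae atTop (fun k => (hφ k).aemeasurable) ?_
  filter_upwards [hfin] with Λ hΛ
  have hsum : Tendsto (fun k => ∑ x ∈ hΛ.toFinset, φ k x) atTop (𝓝 (∑ _x ∈ hΛ.toFinset, 1)) :=
    tendsto_finsetSum _ fun x hx => (Complex.continuous_ofReal.tendsto 1).comp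
      (tendsto_min_one_mul_infDist hA hAc (hΛ.mem_toFinset.1 hx).2)
  have hcard : ‖∑ _x ∈ hΛ.toFinset, (1 : ℂ)‖ₑ = (Λ ∩ A).encard := by
    rw [Finset.sum_const, nsmul_one, hΛ.encard_eq_coe_toFinset_card, ← ofReal_norm]
    simp
  simpa only [Nf_eq_sum (hφA _) hΛ, hcard] using hsum.enorm

theorem aemeasurable_encard_inter_of_isBounded (hd : 0 < d)
    (hfin : ∀ B : Set (Vd d), Bornology.IsBounded B → ∀ᵐ Λ ∂μ, (Λ ∩ B).Finite)
    {A : Set (Vd d)} (hA : MeasurableSet A) (hAb : Bornology.IsBounded A) :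
    AEMeasurable (fun Λ => ((Λ ∩ A).encard : ℝ≥0∞)) μ := by
  obtain ⟨R, hAR⟩ := hAb.subset_ball 0
  set U := Metric.ball (0 : Vd d) R
  suffices key : ∀ t, MeasurableSet t → AEMeasurable (fun Λ => ((Λ ∩ (t ∩ U)).encard : ℝ≥0∞)) μ by
    simpa only [inter_eq_left.2 hAR] using key A hA
  have hopen : ∀ t, IsOpen t → AEMeasurable (fun Λ => ((Λ ∩ (t ∩ U)).encard : ℝ≥0∞)) μ :=
    fun t ht => aemeasurable_encard_inter_of_isOpen hd (ht.inter Metric.isOpen_ball)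
      (Metric.isBounded_ball.subset inter_subset_right)
      (hfin _ (Metric.isBounded_ball.subset inter_subset_right))
  refine MeasurableSpace.induction_on_inter BorelSpace.measurable_eq isPiSystem_isOpen
    (by simp) hopen (fun t _ ht => ?_) (fun F hF _ hFm => ?_)
  · refine ((hopen univ isOpen_univ).sub ht).congr ?_
    filter_upwards [hfin U Metric.isBounded_ball] with Λ hΛ
    have hsplit : (Λ ∩ (tᶜ ∩ U)) ∪ (Λ ∩ (t ∩ U)) = Λ ∩ (univ ∩ U) := by
      ext x; by_cases hx : x ∈ t <;> simp [hx]
    have hdisj : Disjoint (Λ ∩ (tᶜ ∩ U)) (Λ ∩ (t ∩ U)) :=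
      disjoint_left.2 fun x hx hx' => hx.2.1 hx'.2.1
    have hfin' : (Λ ∩ (t ∩ U)).encard ≠ ⊤ :=
      ((hΛ.subset fun x hx => ⟨hx.1, hx.2.2⟩).encard_lt_top).ne
    rw [Pi.sub_apply, ← hsplit, encard_union_eq hdisj, ENat.toENNReal_add,
      ENNReal.add_sub_cancel_right]
    simp [hfin']
  · have hsum : AEMeasurable (fun Λ => ∑' i, ((Λ ∩ (F i ∩ U)).encard : ℝ≥0∞)) μ := .tsum hFm
    refine hsum.congr (ae_of_all _ fun Λ => ?_)
    dsimp only
    have hU : Λ ∩ ((⋃ i, F i) ∩ U) = ⋃ i, Λ ∩ (F i ∩ U) := by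
      simp only [iUnion_inter, inter_iUnion]
    rw [hU, encard_iUnion_of_pairwise_disjoint fun i j hij =>
      disjoint_left.2 fun x hi hj => disjoint_left.1 (hF hij) hi.2.1 hj.2.1]

theorem aemeasurable_encard_inter (hd : 0 < d)
    (hfin : ∀ B : Set (Vd d), Bornology.IsBounded B → ∀ᵐ Λ ∂μ, (Λ ∩ B).Finite)
    {A : Set (Vd d)} (hA : MeasurableSet A) :
    AEMeasurable (fun Λ => ((Λ ∩ A).encard : ℝ≥0∞)) μ := by
  have hmono : Monotone fun n : ℕ => A ∩ Metric.ball (0 : Vd d) n := fun m n hmn =>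
    inter_subset_inter_right A (Metric.ball_subset_ball (by exact_mod_cast hmn))
  have hA' : ∀ Λ : Set (Vd d), Λ ∩ A = ⋃ n : ℕ, Λ ∩ (A ∩ Metric.ball 0 n) := fun Λ => by
    rw [← inter_iUnion, ← inter_iUnion, Metric.iUnion_ball_nat, inter_univ]
  simp only [hA', encard_iUnion_of_monotone fun m n hmn => inter_subset_inter_right _ (hmono hmn)]
  exact .iSup fun n => aemeasurable_encard_inter_of_isBounded hd hfin
    (hA.inter Metric.isOpen_ball.measurableSet) (Metric.isBounded_ball.subset inter_subset_right)

end Measurability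

namespace IsPointProcess

variable {d : ℕ} {r : ℝ} {X : Set (Set (Vd d))} {μ : Measure (Set (Vd d))} {I : ℝ≥0}

theorem ae_UD (hX : IsPointProcess d r X μ I) : ∀ᵐ Λ ∂μ, UD r Λ :=
  measure_mono_null (fun Λ hΛ => mt (hX.ud Λ) hΛ) hX.suppX

theorem lintegral_tsum_eq (hX : IsPointProcess d r X μ I) (hd : 0 < d) (hr : 0 < r)
    {h : Vd d → ℝ≥0∞} (hh : Measurable h) :
    ∫⁻ Λ, ∑' x : Λ, h x ∂μ = I * ∫⁻ x, h x :=
  lintegral_tsum_eq_of_lintegral_encard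
    (fun _ hA => aemeasurable_encard_inter hd
      (fun _ hB => hX.ae_UD.mono fun _ hΛ => hΛ.finite_inter_of_isBounded hr hB) hA)
    hX.intensity hh

theorem lintegral_enorm_Nf_sq_le (hX : IsPointProcess d r X μ I) (hd : 0 < d) (hr : 0 < r)
    {K : Set (Vd d)} {C : ℕ} (hC : ∀ Λ, UD r Λ → (Λ ∩ K).encard ≤ C) {g : Vd d → ℂ}
    (hg : Measurable g) (hgK : support g ⊆ K) {B : ℝ≥0} (hB : ∀ x, ‖g x‖ₑ ≤ B) :
    ∫⁻ Λ, ‖Nf g Λ‖ₑ ^ 2 ∂μ ≤ C * B * (I * ∫⁻ x, ‖g x‖ₑ) := by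
  rw [← hX.lintegral_tsum_eq hd hr hg.enorm, ← lintegral_const_mul' _ _ (by finiteness)]
  refine lintegral_mono_ae (hX.ae_UD.mono fun Λ hΛ => ?_)
  exact (enorm_Nf_sq_le hgK hB).trans (by gcongr; exact_mod_cast hC Λ hΛ)

end IsPointProcess

theorem Nf_tendsto_L2_general {d : ℕ} (hd : 0 < d) {r : ℝ} (hr : 0 < r)
    {X : Set (Set (Vd d))} {μ : Measure (Set (Vd d))} {I : ℝ≥0}
    (hX : IsPointProcess d r X μ I)
    (K : Set (Vd d)) (hK : IsCompact K) (M : ℝ)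
    (fs : ℕ → Vd d → ℂ) (f : Vd d → ℂ)
    (hfsm : ∀ n, Measurable (fs n)) (hfm : Measurable f)
    (hfss : ∀ n, Function.support (fs n) ⊆ K) (hfsupp : Function.support f ⊆ K)
    (hfsb : ∀ n x, ‖fs n x‖ < M) (hfb : ∀ x, ‖f x‖ < M)
    (hL1 : Tendsto (fun n => ∫ x, ‖fs n x - f x‖) atTop (𝓝 0)) :
    Tendsto (fun n => ∫ Λ, ‖Nf (fs n) Λ - Nf f Λ‖ ^ 2 ∂μ) atTop (𝓝 0) := by
  obtain ⟨C, hC⟩ := exists_encard_inter_le_of_UD hr hK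
  have hK' : ∀ n, support (fs n - f) ⊆ K := fun n =>
    (support_sub _ _).trans (union_subset (hfss n) hfsupp)
  have hM : ∀ n x, ‖(fs n - f) x‖ ≤ 2 * M := fun n x =>
    (norm_sub_le _ _).trans (by linarith [hfsb n x, hfb x])
  have hbound : ∀ n, ∫⁻ Λ, ‖‖Nf (fs n) Λ - Nf f Λ‖ ^ 2‖ₑ ∂μ ≤
      C * (2 * M).toNNReal * (I * ∫⁻ x, ‖(fs n - f) x‖ₑ) := fun n => by
    refine le_of_eq_of_le (lintegral_congr_ae (hX.ae_UD.mono fun Λ hΛ => ?_))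
      (hX.lintegral_enorm_Nf_sq_le hd hr hC ((hfsm n).sub hfm) (hK' n) fun x => ?_)
    · dsimp only
      rw [enorm_pow, enorm_norm,
        Nf_sub (hfss n) hfsupp (hΛ.finite_inter_of_isBounded hr hK.isBounded)]
    · exact (ofReal_norm _).symm.trans_le (ENNReal.ofReal_le_ofReal (hM n x))
  have hL1' : Tendsto (fun n => ∫⁻ x, ‖(fs n - f) x‖ₑ) atTop (𝓝 0) :=
    tendsto_lintegral_enorm_of_tendsto_integral_norm (fun n =>
      integrable_of_bounded_of_support_subset_isCompact ((hfsm n).sub hfm).aestronglyMeasurable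
        hK (hK' n) (hM n)) hL1
  rw [tendsto_zero_iff_enorm_tendsto_zero]
  refine tendsto_of_tendsto_of_tendsto_of_le_of_le tendsto_const_nhds ?_ (fun _ => zero_le)
    fun n => (enorm_integral_le_lintegral_enorm _).trans (hbound n)
  simpa using ENNReal.Tendsto.const_mul (ENNReal.Tendsto.const_mul hL1' (.inr ENNReal.coe_ne_top))
    (.inr (by finiteness))

/-- If `f_n → f` in `L¹(ℝ^d)`, all with supports in a fixed compact `K` and
uniformly bounded by `M`, then `N_{f_n} → N_f` in `L²(X, μ)`. -/
theorem Nf_tendsto_L2 {d : ℕ} (hd : 0 < d) {r : ℝ} (hr : 0 < r)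
    {X : Set (Set (Vd d))} {μ : Measure (Set (Vd d))} {I : ℝ≥0}
    (hX : IsPointProcess d r X μ I)
    (K : Set (Vd d)) (hK : IsCompact K) (M : ℝ) (hM : 0 < M)
    (fs : ℕ → Vd d → ℂ) (f : Vd d → ℂ)
    (hfsm : ∀ n, Measurable (fs n)) (hfm : Measurable f)
    (hfss : ∀ n, Function.support (fs n) ⊆ K) (hfsupp : Function.support f ⊆ K)
    (hfsb : ∀ n x, ‖fs n x‖ < M) (hfb : ∀ x, ‖f x‖ < M)
    (hL1 : Tendsto (fun n => ∫ x, ‖fs n x - f x‖) atTop (𝓝 0)) :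
    Tendsto (fun n => ∫ Λ, ‖Nf (fs n) Λ - Nf f Λ‖ ^ 2 ∂μ) atTop (𝓝 0) :=
  Nf_tendsto_L2_general hd hr hX K hK M fs f hfsm hfm hfss hfsupp hfsb hfb hL1
end
end

section
/- Let ω be a positive, translation-bounded Borel measure on ℝ^d (i.e. sup_{a∈ℝ^d} ω(a + K) < ∞ for every compact K ⊆ ℝ^d). Then the functions g_R : ℝ^d → ℂ defined by g_R(y) = (1/ℓ(C_R)) ∫_{C_R} e^{2πi y·x} dx converge to the indicator function 1_{{0}} in L²(ℝ^d, ω) as R → ∞; that is, ∫_{ℝ^d} |g_R(y) − 1_{{0}}(y)|² dω(y) → 0. -/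
/-! For `R > 0` the kernel factorises as `g_R(y) = ∏ᵢ sinc (π R yᵢ)`. Since
`|sinc x| ≤ 2 / (1 + |x|)`, for `R ≥ 1` the integrand is dominated by `∏ᵢ (2 / (1 + |yᵢ|))²`,
and it tends to `0` pointwise: at `y = 0` it vanishes, and otherwise some factor
`sinc (π R yⱼ)` tends to `0`. The dominating function is `ω`-integrable: on the unit cube
centred at `n ∈ ℤ^d` it is at most `∏ᵢ 4 / |nᵢ + 1/2|²`, whose sum over `ℤ^d` is a power of a
convergent series, while translation boundedness bounds the `ω`-mass of all these cubes
uniformly. Dominated convergence concludes. -/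

open MeasureTheory Filter Topology Set
open scoped RealInnerProductSpace ENNReal NNReal

noncomputable section

open Complex Real

namespace DirichletKernel

variable {d : ℕ}

theorem cube_eq_preimage_pi (R : ℝ) : cube d R =
    (MeasurableEquiv.toLp 2 (Fin d → ℝ)).symm ⁻¹' Set.pi univ fun _ => Ioo (-(R / 2)) (R / 2) := by
  ext x
  simp only [cube, mem_ofPred_eq, mem_preimage, Set.mem_pi, mem_univ, forall_true_left, mem_Ioo]
  exact forall_congr' fun i => abs_lt

theorem volume_cube (R : ℝ) : volume (cube d R) = ENNReal.ofReal R ^ d := by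
  rw [cube_eq_preimage_pi, (EuclideanSpace.volume_preserving_symm_measurableEquiv_toLp
    (Fin d)).measure_preimage (MeasurableSet.univ_pi fun _ => measurableSet_Ioo).nullMeasurableSet,
    volume_pi, Measure.pi_pi]
  simp [Real.volume_Ioo]

theorem volume_cube_toReal {R : ℝ} (hR : 0 ≤ R) : (volume (cube d R)).toReal = R ^ d := by
  rw [volume_cube, ENNReal.toReal_pow, ENNReal.toReal_ofReal hR]

theorem char_eq_prod (y x : Vd d) :
    char y x = ∏ i, Complex.exp (2 * π * I * y i * x i) := by
  rw [char, ← Complex.exp_sum, PiLp.inner_apply, ofReal_sum, Finset.mul_sum]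
  congr! 2 with i
  simp only [RCLike.inner_apply, conj_trivial, ofReal_mul]
  ring

theorem setIntegral_cube_char (R : ℝ) (y : Vd d) :
    ∫ x in cube d R, char y x =
      ∏ i, ∫ t in Ioo (-(R / 2)) (R / 2), Complex.exp (2 * π * I * y i * t) := by
  simp_rw [char_eq_prod, cube_eq_preimage_pi]
  refine ((EuclideanSpace.volume_preserving_symm_measurableEquiv_toLp
    (Fin d)).setIntegral_preimage_emb (MeasurableEquiv.measurableEmbedding _)
    (fun z : Fin d → ℝ => ∏ i, Complex.exp (2 * π * I * y i * z i)) _).trans ?_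
  rw [volume_pi, Measure.restrict_pi_pi (fun _ : Fin d => (volume : Measure ℝ))]
  exact integral_fintype_prod_eq_prod (μ := fun _ => volume.restrict (Ioo (-(R / 2)) (R / 2)))
    fun i (t : ℝ) => Complex.exp (2 * π * I * y i * t)

theorem integral_Ioo_exp_eq_sinc {R : ℝ} (hR : 0 ≤ R) (a : ℝ) :
    ∫ t in Ioo (-(R / 2)) (R / 2), Complex.exp (2 * π * I * a * t) = R * sinc (π * R * a) := by
  rw [← integral_Ioc_eq_integral_Ioo, ← intervalIntegral.integral_of_le (by linarith)]
  rcases eq_or_ne a 0 with rfl | ha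
  · simp
  have hc : 2 * π * a ≠ 0 := by positivity
  have hsub := intervalIntegral.integral_comp_mul_left (fun s : ℝ => Complex.exp (s * I)) hc
    (a := -(R / 2)) (b := R / 2)
  rw [show 2 * π * a * -(R / 2) = -(π * R * a) by ring,
    show 2 * π * a * (R / 2) = π * R * a by ring, integral_exp_mul_I_eq_sinc] at hsub
  push_cast at hsub
  rw [show (fun t : ℝ => Complex.exp (2 * π * I * a * t)) =
    fun t : ℝ => Complex.exp (2 * π * a * t * I) by ext; ring_nf, hsub, Complex.real_smul]
  have ha' : (a : ℂ) ≠ 0 := ofReal_ne_zero.mpr ha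
  push_cast
  field_simp

theorem abs_sinc_le_two_div (x : ℝ) : |sinc x| ≤ 2 / (1 + |x|) := by
  rcases le_or_gt |x| 1 with hx | hx
  · calc |sinc x| ≤ 1 := abs_sinc_le_one x
      _ ≤ 2 / (1 + |x|) := by rw [le_div_iff₀ (by positivity)]; linarith
  · have hx0 : x ≠ 0 := by rintro rfl; norm_num at hx
    calc |sinc x| = |Real.sin x| / |x| := by rw [sinc_of_ne_zero hx0, abs_div]
      _ ≤ 1 / |x| := by gcongr; exact abs_sin_le_one x
      _ ≤ 2 / (1 + |x|) := by rw [div_le_div_iff₀ (by positivity) (by positivity)]; linarith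

theorem tendsto_sinc_mul_atTop {c : ℝ} (hc : c ≠ 0) :
    Tendsto (fun R => sinc (c * R)) atTop (𝓝 0) := by
  have hbound : Tendsto (fun R : ℝ => 2 / (1 + |c| * |R|)) atTop (𝓝 0) :=
    tendsto_const_nhds.div_atTop <| tendsto_atTop_add_const_left _ _ <|
      (tendsto_abs_atTop_atTop.comp tendsto_id).const_mul_atTop (abs_pos.mpr hc)
  refine squeeze_zero_norm (fun R => ?_) hbound
  simpa only [Real.norm_eq_abs, abs_mul] using abs_sinc_le_two_div (c * R)

/-- The function `g_R`. -/
def dirichletKernel (d : ℕ) (R : ℝ) (y : Vd d) : ℂ :=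
  ((volume (cube d R)).toReal)⁻¹ • ∫ x in cube d R, char y x

theorem dirichletKernel_eq_prod_sinc {R : ℝ} (hR : 0 < R) (y : Vd d) :
    dirichletKernel d R y = ∏ i, (sinc (π * R * y i) : ℂ) := by
  rw [dirichletKernel, volume_cube_toReal hR.le, setIntegral_cube_char]
  simp only [integral_Ioo_exp_eq_sinc hR.le, Finset.prod_mul_distrib, Finset.prod_const,
    Finset.card_univ, Fintype.card_fin, Complex.real_smul]
  push_cast
  rw [← mul_assoc, inv_mul_cancel₀ (by exact_mod_cast (pow_pos hR d).ne'), one_mul]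

theorem dirichletKernel_zero {R : ℝ} (hR : 0 < R) : dirichletKernel d R 0 = 1 := by
  simp [dirichletKernel_eq_prod_sinc hR]

theorem continuous_dirichletKernel {R : ℝ} (hR : 0 < R) : Continuous (dirichletKernel d R) := by
  simp_rw [funext (dirichletKernel_eq_prod_sinc hR)]
  fun_prop

theorem norm_dirichletKernel_le_prod {R : ℝ} (hR : 1 ≤ R) (y : Vd d) :
    ‖dirichletKernel d R y‖ ≤ ∏ i, 2 / (1 + |y i|) := by
  rw [dirichletKernel_eq_prod_sinc (by linarith), norm_prod]
  refine Finset.prod_le_prod (fun _ _ => norm_nonneg _) fun i _ => ?_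
  have hy : |y i| ≤ |π * R * y i| := by
    rw [abs_mul, abs_mul, abs_of_pos pi_pos, abs_of_pos (by linarith : (0 : ℝ) < R)]
    exact le_mul_of_one_le_left (abs_nonneg _) (by nlinarith [pi_gt_three])
  rw [norm_real, Real.norm_eq_abs]
  exact (abs_sinc_le_two_div _).trans (by gcongr)

theorem norm_dirichletKernel_le_abs_sinc {R : ℝ} (hR : 0 < R) (y : Vd d) (j : Fin d) :
    ‖dirichletKernel d R y‖ ≤ |sinc (π * R * y j)| := by
  rw [dirichletKernel_eq_prod_sinc hR, norm_prod, ← Finset.mul_prod_erase _ _ (Finset.mem_univ j)]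
  simp only [norm_real, Real.norm_eq_abs]
  exact mul_le_of_le_one_right (abs_nonneg _)
    (Finset.prod_le_one (fun _ _ => abs_nonneg _) fun i _ => abs_sinc_le_one _)

theorem tendsto_dirichletKernel_sub_indicator (y : Vd d) :
    Tendsto (fun R => dirichletKernel d R y - Set.indicator {0} (fun _ => (1 : ℂ)) y) atTop
      (𝓝 0) := by
  rcases eq_or_ne y 0 with rfl | hy
  · refine tendsto_const_nhds.congr' ?_
    filter_upwards [eventually_gt_atTop 0] with R hR
    simp [dirichletKernel_zero hR]
  · obtain ⟨j, hj⟩ : ∃ j, y j ≠ 0 := by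
      by_contra! h
      exact hy (PiLp.ext h)
    rw [indicator_of_notMem (by simpa using hy)]
    simp only [sub_zero]
    have hsinc := (tendsto_sinc_mul_atTop (mul_ne_zero pi_ne_zero hj)).abs
    rw [abs_zero] at hsinc
    refine squeeze_zero_norm' ?_ hsinc
    filter_upwards [eventually_gt_atTop 0] with R hR
    simpa only [mul_right_comm] using norm_dirichletKernel_le_abs_sinc hR y j

theorem mem_tr_iff {t y : Vd d} {K : Set (Vd d)} : y ∈ tr t K ↔ y - t ∈ K := by
  rw [tr, Set.image_add_left, mem_preimage, neg_add_eq_sub]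

theorem lintegral_le_tsum_mul_iSup_measure_tr {ι : Type*} [Countable ι] (ω : Measure (Vd d))
    {K : Set (Vd d)} (a : ι → Vd d) (hcover : ∀ y, ∃ n, y ∈ tr (a n) K) {f : Vd d → ℝ≥0∞}
    {b : ι → ℝ≥0∞} (hfb : ∀ n, ∀ y ∈ tr (a n) K, f y ≤ b n) :
    ∫⁻ y, f y ∂ω ≤ (∑' n, b n) * ⨆ t, ω (tr t K) := by
  have hunion : (⋃ n, tr (a n) K) = univ := eq_univ_of_forall fun y => mem_iUnion.mpr (hcover y)
  calc ∫⁻ y, f y ∂ω = ∫⁻ y in ⋃ n, tr (a n) K, f y ∂ω := by rw [hunion, Measure.restrict_univ]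
    _ ≤ ∑' n, ∫⁻ y in tr (a n) K, f y ∂ω := lintegral_iUnion_le _ _
    _ ≤ ∑' n, b n * ⨆ t, ω (tr t K) := ENNReal.tsum_le_tsum fun n => calc
        ∫⁻ y in tr (a n) K, f y ∂ω ≤ ∫⁻ _ in tr (a n) K, b n ∂ω :=
          setLIntegral_mono measurable_const (hfb n)
        _ = b n * ω (tr (a n) K) := setLIntegral_const _ _
        _ ≤ b n * ⨆ t, ω (tr t K) := by gcongr; exact le_iSup (fun t => ω (tr t K)) (a n)
    _ = (∑' n, b n) * ⨆ t, ω (tr t K) := ENNReal.tsum_mul_right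

theorem tsum_fin_pi_prod_eq_pow {κ : Type*} (f : κ → ℝ≥0∞) :
    ∀ d : ℕ, ∑' n : Fin d → κ, ∏ i, f (n i) = (∑' k, f k) ^ d
  | 0 => by simp
  | d + 1 => by
    rw [← (Fin.consEquiv fun _ => κ).tsum_eq, ENNReal.tsum_prod', pow_succ',
      ← ENNReal.tsum_mul_right, ← tsum_fin_pi_prod_eq_pow f d]
    simp only [Fin.consEquiv_apply, Fin.prod_univ_succ, Fin.cons_zero, Fin.cons_succ,
      ENNReal.tsum_mul_left]

theorem isCompact_setOf_forall_abs_le (r : ℝ) : IsCompact {x : Vd d | ∀ i, |x i| ≤ r} := by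
  have hpre : {x : Vd d | ∀ i, |x i| ≤ r} =
      (EuclideanSpace.equiv (Fin d) ℝ).toHomeomorph ⁻¹' Set.pi univ fun _ => Icc (-r) r := by
    ext x
    simp only [mem_ofPred_eq, mem_preimage, Set.mem_univ_pi, mem_Icc, abs_le]
    rfl
  rw [hpre, Homeomorph.isCompact_preimage]
  exact isCompact_univ_pi fun _ => isCompact_Icc

theorem lintegral_prod_lt_top_of_translationBounded (ω : Measure (Vd d))
    (htb : ∀ K : Set (Vd d), IsCompact K → (⨆ a : Vd d, ω (tr a K)) < ⊤) {φ : ℝ → ℝ≥0∞}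
    {b : ℤ → ℝ≥0∞} (hφb : ∀ (n : ℤ) (t : ℝ), |t - n| ≤ 1 / 2 → φ t ≤ b n)
    (hb : ∑' n, b n ≠ ⊤) :
    ∫⁻ y, ∏ i, φ (y i) ∂ω < ⊤ := by
  set K : Set (Vd d) := {x | ∀ i, |x i| ≤ 1 / 2}
  have hmem : ∀ (n : Fin d → ℤ) y, y ∈ tr (WithLp.toLp 2 fun i => (n i : ℝ)) K ↔
      ∀ i, |y i - n i| ≤ 1 / 2 := fun n y => mem_tr_iff
  calc ∫⁻ y, ∏ i, φ (y i) ∂ω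
      ≤ (∑' n : Fin d → ℤ, ∏ i, b (n i)) * ⨆ t, ω (tr t K) :=
        lintegral_le_tsum_mul_iSup_measure_tr ω _
          (fun y => ⟨fun i => round (y i), (hmem _ y).mpr fun i => abs_sub_round _⟩)
          fun n y hy => Finset.prod_le_prod' fun i _ => hφb _ _ ((hmem n y).mp hy i)
    _ = (∑' k, b k) ^ d * ⨆ t, ω (tr t K) := by rw [tsum_fin_pi_prod_eq_pow]
    _ < ⊤ := ENNReal.mul_lt_top (ENNReal.pow_lt_top hb.lt_top)
        (htb K (isCompact_setOf_forall_abs_le _))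

theorem two_div_one_add_abs_le {n : ℤ} {t : ℝ} (h : |t - n| ≤ 1 / 2) :
    2 / (1 + |t|) ≤ 2 / |(n : ℝ) + 1 / 2| := by
  have hodd : (1 : ℝ) ≤ |2 * (n : ℝ) + 1| := by exact_mod_cast Int.one_le_abs (by omega)
  have hpos : 0 < |(n : ℝ) + 1 / 2| := by
    rw [show 2 * (n : ℝ) + 1 = 2 * (n + 1 / 2) by ring, abs_mul, abs_two] at hodd
    linarith
  obtain ⟨h₁, h₂⟩ := abs_le.mp h
  refine div_le_div_of_nonneg_left zero_le_two hpos (abs_le.mpr ⟨?_, ?_⟩) <;>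
    linarith [neg_abs_le t, le_abs_self t]

theorem lintegral_prod_two_div_sq_lt_top (ω : Measure (Vd d))
    (htb : ∀ K : Set (Vd d), IsCompact K → (⨆ a : Vd d, ω (tr a K)) < ⊤) :
    ∫⁻ y, ∏ i, ENNReal.ofReal ((2 / (1 + |y i|)) ^ 2) ∂ω < ⊤ := by
  have hsum := ((Real.summable_one_div_int_add_rpow (1 / 2) 2).mpr one_lt_two).mul_left 4
  refine lintegral_prod_lt_top_of_translationBounded ω htb
    (φ := fun t => ENNReal.ofReal ((2 / (1 + |t|)) ^ 2)) (fun n t ht => ?_)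
    (ENNReal.ofReal_tsum_of_nonneg (fun n => by positivity) hsum ▸ ENNReal.ofReal_ne_top)
  refine ENNReal.ofReal_le_ofReal ?_
  calc (2 / (1 + |t|)) ^ 2 ≤ (2 / |(n : ℝ) + 1 / 2|) ^ 2 :=
        pow_le_pow_left₀ (by positivity) (two_div_one_add_abs_le ht) 2
    _ = 4 * (1 / |(n : ℝ) + 1 / 2| ^ (2 : ℝ)) := by rw [Real.rpow_two]; ring

theorem enorm_sq_dirichletKernel_sub_indicator_le {R : ℝ} (hR : 1 ≤ R) (y : Vd d) :
    (‖dirichletKernel d R y - Set.indicator {0} (fun _ => (1 : ℂ)) y‖₊ : ℝ≥0∞) ^ 2 ≤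
      ∏ i, ENNReal.ofReal ((2 / (1 + |y i|)) ^ 2) := by
  rw [← ENNReal.ofReal_prod_of_nonneg (fun i _ => by positivity), Finset.prod_pow,
    ← enorm_eq_nnnorm, ← ofReal_norm, ← ENNReal.ofReal_pow (norm_nonneg _)]
  gcongr
  rcases eq_or_ne y 0 with rfl | hy
  · simp only [dirichletKernel_zero (zero_lt_one.trans_le hR), indicator_of_mem (mem_singleton _),
      sub_self, norm_zero]
    positivity
  · rw [indicator_of_notMem (by simpa using hy), sub_zero]
    exact norm_dirichletKernel_le_prod hR y

end DirichletKernel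

open DirichletKernel

theorem dirichlet_kernel_to_indicator_general {d : ℕ} (ω : Measure (Vd d))
    (htb : ∀ K : Set (Vd d), IsCompact K → (⨆ a : Vd d, ω (tr a K)) < ⊤) :
    Tendsto (fun R : ℝ => ∫⁻ y,
        (‖(((volume (cube d R)).toReal)⁻¹ • ∫ x in cube d R, char y x)
            - Set.indicator {0} (fun _ => (1 : ℂ)) y‖₊ : ℝ≥0∞) ^ 2 ∂ω)
      atTop (𝓝 0) := by
  have hmeas : ∀ᶠ R : ℝ in atTop, Measurable fun y =>
      (‖dirichletKernel d R y - Set.indicator {0} (fun _ => (1 : ℂ)) y‖₊ : ℝ≥0∞) ^ 2 := by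
    filter_upwards [eventually_gt_atTop 0] with R hR
    exact ((continuous_dirichletKernel hR).measurable.sub (measurable_const.indicator
      (measurableSet_singleton 0))).nnnorm.coe_nnreal_ennreal.pow_const 2
  have hlim := tendsto_lintegral_filter_of_dominated_convergence (f := fun _ => 0) _ hmeas
    ((eventually_ge_atTop 1).mono fun R hR =>
      ae_of_all ω (enorm_sq_dirichletKernel_sub_indicator_le hR))
    (lintegral_prod_two_div_sq_lt_top ω htb).ne
    (ae_of_all _ fun y => by
      simpa using ENNReal.Tendsto.pow (n := 2)
        (((ENNReal.continuous_coe.comp continuous_nnnorm).tendsto 0).comp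
          (tendsto_dirichletKernel_sub_indicator y)))
  rwa [lintegral_zero] at hlim

/-- For a positive translation-bounded measure `ω` on `ℝ^d`, the functions
`g_R(y) = ℓ(C_R)⁻¹ ∫_{C_R} e^{2πi y·x} dx` converge to `1_{{0}}` in `L²(ℝ^d, ω)` as `R → ∞`. -/
theorem dirichlet_kernel_to_indicator {d : ℕ} (hd : 0 < d) (ω : Measure (Vd d))
    (htb : ∀ K : Set (Vd d), IsCompact K → (⨆ a : Vd d, ω (tr a K)) < ⊤) :
    Tendsto (fun R : ℝ => ∫⁻ y,
        (‖(((volume (cube d R)).toReal)⁻¹ • ∫ x in cube d R, char y x)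
            - Set.indicator {0} (fun _ => (1 : ℂ)) y‖₊ : ℝ≥0∞) ^ 2 ∂ω)
      atTop (𝓝 0) :=
  dirichlet_kernel_to_indicator_general ω htb
end
end
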